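/- arXiv:1506.07267 — 2 statements merged into one kernel-verified Lean document; each statement's English description precedes it below -/
import Mathlib

section
/- Let s ≥ 2, n ≥ 1, x ∈ (ℂ*)^s, and μ, ν ∈ Z_{s,n}. If there exists j ∈ {1,…,s−1} with ν_j < μ_j, then F_μ(x; η_ν(x)) = 0. In particular, F_μ(x; η_ν(x)) = 0 whenever ν ≺ μ in the lexicographic order. -/
open Finset

/-- the infinite q-shifted factorial `(u)_∞`. -/
noncomputable def pinf (q u : ℂ) : ℂ := ∏' l : ℕ, (1 - u * q ^ l)

/-- the theta function `θ(u) = (u)_∞ (q/u)_∞`. -/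
noncomputable def theta (q u : ℂ) : ℂ := pinf q u * pinf q (q / u)

/-- `e(a;b) = a⁻¹ θ(ab) θ(a/b)`. -/
noncomputable def ee (q a b : ℂ) : ℂ := a⁻¹ * theta q (a * b) * theta q (a / b)

/-- the t-shifted factorial `e(a;b)_r`. -/
noncomputable def eer (q t a b : ℂ) (r : ℕ) : ℂ := ∏ k ∈ Finset.range r, ee q (a * t ^ k) b

/-- `Z_{s,n} = {μ ∈ ℕ^s : μ_1 + ⋯ + μ_s = n}`. -/
abbrev ZIdx (s n : ℕ) := {μ : Fin s → Fin (n+1) // ∑ i, (μ i : ℕ) = n}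

/-- the underlying `ℕ`-valued multi-index. -/
def zv {s n : ℕ} (μ : ZIdx s n) : Fin s → ℕ := fun i => (μ.1 i : ℕ)

/-- the point `x_μ ∈ (ℂ*)^n`: blocks `x_i, x_i t, …, x_i t^{μ_i - 1}`. -/
noncomputable def xpt (t : ℂ) {s : ℕ} (x : Fin s → ℂ) (μ : Fin s → ℕ) (n : ℕ) : Fin n → ℂ :=
  fun k =>
    (List.flatten (List.ofFn fun i : Fin s =>
      List.ofFn fun j : Fin (μ i) => x i * t ^ (j : ℕ))).getD k 1

/-- the point `η_ν(x) = (x_1 t^{ν_1}, …, x_{s-1} t^{ν_{s-1}}) ∈ (ℂ*)^{s-1}`. -/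
noncomputable def eta (t : ℂ) {s : ℕ} (x : Fin s → ℂ) (ν : Fin s → ℕ) : Fin (s-1) → ℂ :=
  fun j => x (Fin.castLE (Nat.sub_le s 1) j) * t ^ (ν (Fin.castLE (Nat.sub_le s 1) j))

/-- `F_μ(x;y) = ∏_{i=1}^{s} ∏_{j=1}^{s-1} e(x_i; y_j)_{μ_i}`. -/
noncomputable def Ffun (q t : ℂ) {s : ℕ} (x : Fin s → ℂ) (μ : Fin s → ℕ)
    (y : Fin (s-1) → ℂ) : ℂ :=
  ∏ i : Fin s, ∏ j : Fin (s-1), eer q t (x i) (y j) (μ i)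

/-- `λ_j^{(k)} = |K_j ∩ {1,…,k}|` where `K_j = c⁻¹(j)` (0-based: indices `< k`). -/
def cnt {s n : ℕ} (c : Fin n → Fin s) (j : Fin s) (k : Fin n) : ℕ :=
  ((Finset.univ : Finset (Fin n)).filter fun l => l < k ∧ c l = j).card

/-- the elliptic Lagrange interpolation function `E_λ(x;z)` (explicit formula). -/
noncomputable def Efun (q t : ℂ) {s n : ℕ} (x : Fin s → ℂ) (lam : Fin s → ℕ)
    (z : Fin n → ℂ) : ℂ :=
  ∑ c ∈ (Finset.univ : Finset (Fin n → Fin s)).filter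
      (fun c => ∀ i, ((Finset.univ : Finset (Fin n)).filter fun k => c k = i).card = lam i),
    ∏ k : Fin n, ∏ j ∈ (Finset.univ : Finset (Fin s)).filter (fun j => j ≠ c k),
      ee q (z k) (x j * t ^ cnt c j k) / ee q (x (c k) * t ^ cnt c (c k) k) (x j * t ^ cnt c j k)

/-- `(ℂ*)^n` inside `ℂ^n`. -/
def torus (n : ℕ) : Set (Fin n → ℂ) := {z | ∀ i, z i ≠ 0}

/-- membership in the space `H_{m,n}` of W_n-invariant holomorphic functions on `(ℂ*)^n`
with the quasi-periodicity `f(…, q z_i, …) = (q z_i^2)^{-m} f(z)`. -/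
def MemH (q : ℂ) (m n : ℕ) (f : (Fin n → ℂ) → ℂ) : Prop :=
  AnalyticOnNhd ℂ f (torus n) ∧
  (∀ z ∈ torus n, ∀ σ : Equiv.Perm (Fin n), f (z ∘ σ) = f z) ∧
  (∀ z ∈ torus n, ∀ i, f (Function.update z i (z i)⁻¹) = f z) ∧
  (∀ z ∈ torus n, ∀ i, f (Function.update z i (q * z i)) = ((q * z i ^ 2) ^ m)⁻¹ * f z)

/-- genericity of `x`: `e(x_i t^a; x_j t^b) ≠ 0` for `i < j` and `0 ≤ a, b ≤ n`. -/
def Generic (q t : ℂ) {s : ℕ} (n : ℕ) (x : Fin s → ℂ) : Prop :=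
  ∀ i j : Fin s, i < j → ∀ a b : ℕ, a ≤ n → b ≤ n → ee q (x i * t ^ a) (x j * t ^ b) ≠ 0

/-- lexicographic order `μ ≺ ν` on multi-indices. -/
def lexLt {s : ℕ} (μ ν : Fin s → ℕ) : Prop :=
  ∃ k : Fin s, (∀ j : Fin s, j < k → μ j = ν j) ∧ μ k < ν k

/-! When `ν_j < μ_j`, the factor `e(x_j; x_j t^{ν_j})_{μ_j}` of `F_μ(x; η_ν(x))` contains
`e(x_j t^{ν_j}; x_j t^{ν_j})`, which vanishes because `θ(1) = 0`. -/

lemma pinf_one (q : ℂ) : pinf q 1 = 0 :=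
  tprod_of_exists_eq_zero ⟨0, by simp⟩

lemma theta_one (q : ℂ) : theta q 1 = 0 := by
  simp [theta, pinf_one]

lemma ee_self {a : ℂ} (q : ℂ) (ha : a ≠ 0) : ee q a a = 0 := by
  simp [ee, div_self ha, theta_one]

lemma eer_mul_pow_eq_zero {a t : ℂ} (q : ℂ) (ha : a ≠ 0) (ht : t ≠ 0) {m r : ℕ} (hmr : m < r) :
    eer q t a (a * t ^ m) r = 0 :=
  prod_eq_zero (mem_range.mpr hmr) (ee_self q (mul_ne_zero ha (pow_ne_zero m ht)))

lemma Ffun_eta_eq_zero {t : ℂ} (q : ℂ) (ht : t ≠ 0) {s : ℕ} {x : Fin s → ℂ} (hx : ∀ i, x i ≠ 0)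
    {μ ν : Fin s → ℕ} (j : Fin s) (hj : (j : ℕ) < s - 1) (hνμ : ν j < μ j) :
    Ffun q t x μ (eta t x ν) = 0 := by
  have hη : eta t x ν ⟨j, hj⟩ = x j * t ^ ν j := rfl
  refine prod_eq_zero (mem_univ j) (prod_eq_zero (mem_univ ⟨j, hj⟩) ?_)
  rw [hη]
  exact eer_mul_pow_eq_zero q (hx j) ht hνμ

/-- A lexicographic descent between multi-indices of equal weight cannot first occur in the last
coordinate, since that coordinate is determined by the others. -/
lemma exists_lt_of_lexLt_of_sum_eq {s : ℕ} {μ ν : Fin s → ℕ} (hsum : ∑ i, ν i = ∑ i, μ i)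
    (h : lexLt ν μ) : ∃ j : Fin s, (j : ℕ) < s - 1 ∧ ν j < μ j := by
  obtain ⟨k, hpre, hlt⟩ := h
  refine ⟨k, ?_, hlt⟩
  by_contra hk
  have hrest : ∑ i ∈ univ.erase k, ν i = ∑ i ∈ univ.erase k, μ i := by
    refine sum_congr rfl fun j hj => hpre j ?_
    have hjk : (j : ℕ) ≠ k := Fin.val_ne_of_ne (ne_of_mem_erase hj)
    exact Fin.lt_def.mpr (by omega)
  rw [← add_sum_erase _ _ (mem_univ k), ← add_sum_erase _ _ (mem_univ k), hrest] at hsum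
  omega

theorem Ffun_triangular_general (q : ℂ) (t : ℂ) (ht : t ≠ 0) (s n : ℕ)
    (x : Fin s → ℂ) (hx : ∀ i, x i ≠ 0) (μ ν : ZIdx s n) :
    ((∃ j : Fin s, (j : ℕ) < s - 1 ∧ zv ν j < zv μ j) →
        Ffun q t x (zv μ) (eta t x (zv ν)) = 0) ∧
    (lexLt (zv ν) (zv μ) → Ffun q t x (zv μ) (eta t x (zv ν)) = 0) := by
  have hsum : ∑ i, zv ν i = ∑ i, zv μ i := ν.2.trans μ.2.symm
  refine ⟨fun ⟨j, hj, hlt⟩ => Ffun_eta_eq_zero q ht hx j hj hlt, fun hlex => ?_⟩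
  obtain ⟨j, hj, hlt⟩ := exists_lt_of_lexLt_of_sum_eq hsum hlex
  exact Ffun_eta_eq_zero q ht hx j hj hlt

/-- Triangularity: `F_μ(x; η_ν(x)) = 0` if `ν_j < μ_j` for some `j ≤ s-1`;
in particular `F_μ(x; η_ν(x)) = 0` whenever `ν ≺ μ` lexicographically. -/
theorem Ffun_triangular (q : ℂ) (hq0 : 0 < ‖q‖) (hq1 : ‖q‖ < 1)
    (t : ℂ) (ht : t ≠ 0) (s n : ℕ) (hs : 2 ≤ s) (hn : 1 ≤ n)
    (x : Fin s → ℂ) (hx : ∀ i, x i ≠ 0) (μ ν : ZIdx s n) :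
    ((∃ j : Fin s, (j : ℕ) < s - 1 ∧ zv ν j < zv μ j) →
        Ffun q t x (zv μ) (eta t x (zv ν)) = 0) ∧
    (lexLt (zv ν) (zv μ) → Ffun q t x (zv μ) (eta t x (zv ν)) = 0) :=
  Ffun_triangular_general q t ht s n x hx μ ν
end

section
/- Let s ≥ 2 and n = m + l with m, l ≥ 1, and let x ∈ (ℂ*)^s be generic (for the size-n condition, so in particular all denominators occurring below are nonzero). Write z = (z', z'') ∈ (ℂ*)^n with z' = (z_1,…,z_m) ∈ (ℂ*)^m and z'' = (z_{m+1},…,z_n) ∈ (ℂ*)^l. Then for every λ ∈ Z_{s,n}: E_λ(x; z) = Σ_{μ∈Z_{s,m}, ν∈Z_{s,l}, μ+ν=λ} E_μ(x; z') · E_ν(x t^μ; z''), where x t^μ = (x_1 t^{μ_1}, x_2 t^{μ_2}, …, x_s t^{μ_s}). -/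
open Finset

/-!
A set partition `K_1 ⊔ ⋯ ⊔ K_s` of `{1, …, n}` is encoded by the coloring `c : Fin n → Fin s`
with `K_i = c⁻¹(i)`, and `cnt c j k` is `λ_j^{(k-1)}`. Split a coloring of `Fin (m + l)` into its
restrictions `c'` to the first `m` and `c''` to the last `l` points. For `k` in the second block,
`λ_j^{(k-1)}` is `|c'⁻¹(j)|` plus the corresponding count of `c''`, so each summand of `E_λ(x; z)`
factors as a summand of `E_μ(x; z')` times a summand of `E_ν(x t^μ; z'')`, with `μ`, `ν` the
fiber sizes of `c'`, `c''`. Grouping colorings according to `(μ, ν)` gives the recursion.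
-/

section Colorings

variable {s N m l : ℕ}

def fiberCard (c : Fin N → Fin s) (i : Fin s) : ℕ :=
  ((Finset.univ : Finset (Fin N)).filter fun k => c k = i).card

lemma fiberCard_le (c : Fin N → Fin s) (i : Fin s) : fiberCard c i ≤ N :=
  (card_filter_le _ _).trans (card_univ.trans (Fintype.card_fin N)).le

lemma sum_fiberCard (c : Fin N → Fin s) : ∑ i, fiberCard c i = N := by
  simpa [fiberCard] using (card_eq_sum_card_fiberwise (f := c) (s := univ) (t := univ)
    fun _ _ => mem_univ _).symm

lemma fiberCard_append (c' : Fin m → Fin s) (c'' : Fin l → Fin s) :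
    fiberCard (Fin.append c' c'') = fiberCard c' + fiberCard c'' := by
  ext i
  simp only [Pi.add_apply, fiberCard, card_filter, Fin.sum_univ_add, Fin.append_left,
    Fin.append_right]

lemma cnt_append_castAdd (c' : Fin m → Fin s) (c'' : Fin l → Fin s) (j : Fin s) (k : Fin m) :
    cnt (Fin.append c' c'') j (Fin.castAdd l k) = cnt c' j k := by
  simp only [cnt, card_filter, Fin.sum_univ_add, Fin.append_left, Fin.append_right]
  have hlt : ∀ (x : Fin l), ¬ Fin.natAdd m x < Fin.castAdd l k := fun x => by
    simp only [Fin.lt_def, Fin.val_natAdd, Fin.val_castAdd]; omega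
  have hcast : ∀ x : Fin m, Fin.castAdd l x < Fin.castAdd l k ↔ x < k := fun _ => Iff.rfl
  simp [hlt, hcast]

lemma cnt_append_natAdd (c' : Fin m → Fin s) (c'' : Fin l → Fin s) (j : Fin s) (k : Fin l) :
    cnt (Fin.append c' c'') j (Fin.natAdd m k) = fiberCard c' j + cnt c'' j k := by
  simp only [cnt, fiberCard, card_filter, Fin.sum_univ_add, Fin.append_left, Fin.append_right]
  have hlt : ∀ (x : Fin m), Fin.castAdd l x < Fin.natAdd m k := fun x => by
    simp only [Fin.lt_def, Fin.val_natAdd, Fin.val_castAdd]; omega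
  simp [hlt]

def fiberIdx (c : Fin N → Fin s) : ZIdx s N :=
  ⟨fun i => ⟨fiberCard c i, Nat.lt_succ_of_le (fiberCard_le c i)⟩, sum_fiberCard c⟩

@[simp]
lemma zv_fiberIdx (c : Fin N → Fin s) : zv (fiberIdx c) = fiberCard c := rfl

lemma zv_injective : Function.Injective (zv : ZIdx s N → Fin s → ℕ) := fun _ _ h =>
  Subtype.ext <| funext fun i => Fin.ext (congrFun h i)

lemma fiberIdx_eq_iff {c : Fin N → Fin s} {μ : ZIdx s N} :
    fiberIdx c = μ ↔ fiberCard c = zv μ := by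
  rw [← zv_injective.eq_iff, zv_fiberIdx]

noncomputable def Eterm (q t : ℂ) (x : Fin s → ℂ) (z : Fin N → ℂ) (c : Fin N → Fin s) : ℂ :=
  ∏ k : Fin N, ∏ j ∈ univ.filter (fun j => j ≠ c k),
    ee q (z k) (x j * t ^ cnt c j k) / ee q (x (c k) * t ^ cnt c (c k) k) (x j * t ^ cnt c j k)

lemma Efun_eq_sum_Eterm (q t : ℂ) (x : Fin s → ℂ) (lam : Fin s → ℕ) (z : Fin N → ℂ) :
    Efun q t x lam z = ∑ c ∈ univ.filter (fun c => fiberCard c = lam), Eterm q t x z c :=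
  sum_congr (filter_congr fun _ _ => funext_iff.symm) fun _ _ => rfl

lemma Eterm_append (q t : ℂ) (x : Fin s → ℂ) (z : Fin (m + l) → ℂ) (c' : Fin m → Fin s)
    (c'' : Fin l → Fin s) :
    Eterm q t x z (Fin.append c' c'') =
      Eterm q t x (z ∘ Fin.castAdd l) c' *
        Eterm q t (fun i => x i * t ^ fiberCard c' i) (z ∘ Fin.natAdd m) c'' := by
  simp only [Eterm, Fin.prod_univ_add, Fin.append_left, Fin.append_right, cnt_append_castAdd,
    cnt_append_natAdd, pow_add, mul_assoc, Function.comp_apply]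

lemma Efun_eq_sum_pairs (q t : ℂ) (x : Fin s → ℂ) (lam : Fin s → ℕ) (z : Fin (m + l) → ℂ) :
    Efun q t x lam z =
      ∑ cc ∈ univ.filter (fun cc : (Fin m → Fin s) × (Fin l → Fin s) =>
          fiberCard cc.1 + fiberCard cc.2 = lam),
        Eterm q t x (z ∘ Fin.castAdd l) cc.1 *
          Eterm q t (fun i => x i * t ^ fiberCard cc.1 i) (z ∘ Fin.natAdd m) cc.2 := by
  rw [Efun_eq_sum_Eterm]
  refine (sum_equiv (Fin.appendEquiv m l) (fun cc => ?_) fun cc _ => ?_).symm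
  · simp only [mem_filter, mem_univ, true_and, ← fiberCard_append]
    exact Iff.rfl
  · exact (Eterm_append ..).symm

lemma Efun_mul_Efun (q t : ℂ) (x : Fin s → ℂ) (μ ν : Fin s → ℕ) (z' : Fin m → ℂ)
    (z'' : Fin l → ℂ) :
    Efun q t x μ z' * Efun q t (fun i => x i * t ^ μ i) ν z'' =
      ∑ cc ∈ univ.filter (fun cc : (Fin m → Fin s) × (Fin l → Fin s) =>
          fiberCard cc.1 = μ ∧ fiberCard cc.2 = ν),
        Eterm q t x z' cc.1 * Eterm q t (fun i => x i * t ^ fiberCard cc.1 i) z'' cc.2 := by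
  rw [Efun_eq_sum_Eterm, Efun_eq_sum_Eterm, sum_mul_sum, ← sum_product', ← univ_product_univ,
    filter_product (p := fun c => fiberCard c = μ) (q := fun c => fiberCard c = ν)]
  refine sum_congr rfl fun cc hcc => ?_
  rw [(mem_filter.1 (mem_product.1 hcc).1).2]

end Colorings

theorem Efun_recursion_general (q : ℂ) (t : ℂ) (s m l : ℕ) (x : Fin s → ℂ)
    (lam : ZIdx s (m + l)) (z : Fin (m + l) → ℂ) :
    Efun q t x (zv lam) z =
      ∑ p ∈ (Finset.univ : Finset (ZIdx s m × ZIdx s l)).filter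
          (fun p => ∀ i, zv p.1 i + zv p.2 i = zv lam i),
        Efun q t x (zv p.1) (z ∘ Fin.castAdd l) *
          Efun q t (fun i => x i * t ^ zv p.1 i) (zv p.2) (z ∘ Fin.natAdd m) := by
  rw [Efun_eq_sum_pairs]
  refine (sum_fiberwise_of_maps_to (g := fun cc => (fiberIdx cc.1, fiberIdx cc.2))
    (fun cc hcc => ?_) _).symm.trans (sum_congr rfl fun p hp => ?_)
  · simpa [funext_iff] using hcc
  have hp : zv p.1 + zv p.2 = zv lam := funext (mem_filter.1 hp).2
  rw [Efun_mul_Efun, filter_filter]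
  refine sum_congr (filter_congr fun cc _ => ?_) fun _ _ => rfl
  rw [Prod.ext_iff, fiberIdx_eq_iff, fiberIdx_eq_iff]
  exact ⟨fun h => h.2, fun h => ⟨by rw [h.1, h.2, hp], h⟩⟩

/-- Recursion formula:
`E_λ(x;z) = Σ_{μ+ν=λ} E_μ(x;z') E_ν(x t^μ; z'')` for `z = (z',z'')`, `n = m + l`. -/
theorem Efun_recursion (q : ℂ) (hq0 : 0 < ‖q‖) (hq1 : ‖q‖ < 1)
    (t : ℂ) (ht : t ≠ 0) (s m l : ℕ) (hs : 2 ≤ s) (hm : 1 ≤ m) (hl : 1 ≤ l)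
    (x : Fin s → ℂ) (hx : ∀ i, x i ≠ 0) (hgen : Generic q t (m + l) x)
    (lam : ZIdx s (m + l)) (z : Fin (m + l) → ℂ) (hz : ∀ k, z k ≠ 0) :
    Efun q t x (zv lam) z =
      ∑ p ∈ (Finset.univ : Finset (ZIdx s m × ZIdx s l)).filter
          (fun p => ∀ i, zv p.1 i + zv p.2 i = zv lam i),
        Efun q t x (zv p.1) (z ∘ Fin.castAdd l) *
          Efun q t (fun i => x i * t ^ zv p.1 i) (zv p.2) (z ∘ Fin.natAdd m) :=
  Efun_recursion_general q t s m l x lam z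
end
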